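/- For all m ≥ 0 and all x, B_m(1-x) = ∑_{n=0}^{m} Ď_n(x) S(m,n), where Ď_n(x) are the Daehee polynomials of the second kind, S(m,n) are the Stirling numbers of the second kind, and B_m is the Bernoulli polynomial. -/

import Mathlib

/-!
Write `D(t) = ∑ Ďₙ(x) tⁿ / n!` and substitute `t ↦ eᵗ - 1`. Under this substitution the Euler
operator `(1 + t) d/dt` becomes `d/dt`, so `log (1 + t)` becomes `t` and `(1 + t)^x` becomes
`e^{xt}`, both by uniqueness of solutions of `f' = a f`. The defining identity of `D` turns into
`D(eᵗ - 1) (eᵗ - 1) e^{xt} = t eᵗ`, i.e. `D(eᵗ - 1) = t e^{(1-x)t} / (eᵗ - 1)`, the Bernoulli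
generating function at `1 - x`. Expanding `D(eᵗ - 1) = ∑ Ďₙ(x) (eᵗ - 1)ⁿ / n!` through the
Stirling numbers and comparing coefficients gives the formula.
-/

open PowerSeries Finset

noncomputable def logOneAdd : PowerSeries ℚ :=
  PowerSeries.mk fun k => if k = 0 then 0 else (-1 : ℚ)^(k+1) / k

noncomputable def onePow (x : ℚ) : PowerSeries ℚ :=
  PowerSeries.mk fun k => (∏ i ∈ Finset.range k, (x - (i : ℚ))) / (Nat.factorial k : ℚ)

noncomputable def expX (x : ℚ) : PowerSeries ℚ :=
  PowerSeries.mk fun k => x ^ k / (Nat.factorial k : ℚ)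

namespace PowerSeries

section CommRing

variable {R : Type*} [CommRing R]

theorem coeff_pow_eq_zero_of_constantCoeff_eq_zero {g : R⟦X⟧} (hg : constantCoeff g = 0)
    {m n : ℕ} (hmn : m < n) : coeff m (g ^ n) = 0 :=
  X_pow_dvd_iff.mp (pow_dvd_pow_of_dvd (X_dvd_iff.mpr hg) n) m hmn

theorem coeff_subst_eq_sum_range {g : R⟦X⟧} (hg : constantCoeff g = 0) (f : R⟦X⟧) (m : ℕ) :
    coeff m (f.subst g) = ∑ n ∈ range (m + 1), coeff n f * coeff m (g ^ n) := by
  rw [coeff_subst' (HasSubst.of_constantCoeff_zero' hg)]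
  refine finsum_eq_sum_of_support_subset _ fun n hn ↦ ?_
  by_contra hnm
  simp only [coe_range, Set.mem_Iio, not_lt] at hnm
  exact hn (by simp [coeff_pow_eq_zero_of_constantCoeff_eq_zero hg (by omega : m < n)])

variable [Algebra ℚ R]

theorem one_add_X_mul_derivative_log : (1 + X) * d⁄dX R (log R) = 1 := by
  have h := congrArg (rescale (-1 : R)) (mk_one_mul_one_sub_eq_one R)
  rw [map_mul, map_sub, map_one, rescale_X] at h
  rw [mul_comm]
  convert h using 2
  · ext n
    simp [deriv_log]
  · simp

theorem derivative_rescale_exp (a : R) :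
    d⁄dX R (rescale a (exp R)) = C a * rescale a (exp R) := by
  rw [rescale_eq_subst, derivative_subst (HasSubst.smul_X' a), derivative_exp,
    ← rescale_eq_subst, mul_comm, smul_eq_C_mul, Derivation.leibniz, derivative_C, derivative_X]
  simp

theorem one_add_X_subst_exp_sub_one : (1 + X : R⟦X⟧).subst (exp R - 1) = exp R := by
  have hE := HasSubst.exp_sub_one (A := R)
  rw [subst_add hE, subst_X hE, ← map_one (C (R := R)), subst_C]
  simp

theorem derivative_subst_exp_sub_one (f : R⟦X⟧) :
    d⁄dX R (f.subst (exp R - 1)) = ((1 + X) * d⁄dX R f).subst (exp R - 1) := by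
  rw [derivative_subst HasSubst.exp_sub_one, map_sub, derivative_exp, Derivation.map_one_eq_zero,
    sub_zero, subst_mul HasSubst.exp_sub_one, one_add_X_subst_exp_sub_one, mul_comm]

variable [IsAddTorsionFree R]

theorem eq_rescale_exp_of_derivative_eq_C_mul {f : R⟦X⟧} {a : R}
    (hd : d⁄dX R f = C a * f) (hc : constantCoeff f = 1) : f = rescale a (exp R) := by
  have hconst : f * rescale (-a) (exp R) = 1 := by
    refine derivative.ext ?_ ?_
    · rw [Derivation.leibniz, derivative_rescale_exp, hd, map_neg, Derivation.map_one_eq_zero]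
      simp only [smul_eq_mul]
      ring
    · rw [map_mul, hc, one_mul, map_one, ← coeff_zero_eq_constantCoeff_apply, coeff_rescale,
        coeff_exp]
      simp
  calc f = f * rescale (-a) (exp R) * rescale a (exp R) := by
        rw [mul_assoc, exp_mul_exp_eq_exp_add, neg_add_cancel, rescale_zero]
        simp
    _ = rescale a (exp R) := by rw [hconst, one_mul]

theorem log_subst_exp_sub_one : (log R).subst (exp R - 1) = X := by
  refine derivative.ext ?_ ?_
  · rw [derivative_subst_exp_sub_one, one_add_X_mul_derivative_log, derivative_X,
      ← map_one (C (R := R)), subst_C]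
    rfl
  · rw [constantCoeff_X]
    exact constantCoeff_subst_eq_zero
      (by rw [map_sub, map_one, ← constantCoeff_eq, constantCoeff_exp, sub_self]) _
      constantCoeff_log

end CommRing

end PowerSeries

theorem logOneAdd_eq_log : logOneAdd = log ℚ := by
  ext n
  simp [logOneAdd]

theorem expX_eq_rescale_exp (x : ℚ) : expX x = rescale x (exp ℚ) := by
  ext n
  simp [expX, coeff_exp, div_eq_mul_inv]

theorem one_add_X_mul_derivative_onePow (x : ℚ) :
    (1 + X) * d⁄dX ℚ (onePow x) = C x * onePow x := by
  ext m
  rw [add_mul, one_mul, map_add, coeff_C_mul]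
  have hsucc (k : ℕ) : ((k + 1).factorial : ℚ) = (k + 1) * k.factorial := by
    push_cast [Nat.factorial_succ]
    rfl
  cases m with
  | zero => simp [onePow, coeff_derivative]
  | succ k =>
    simp only [coeff_succ_X_mul, coeff_derivative, onePow, coeff_mk, prod_range_succ, hsucc]
    push_cast
    field_simp
    ring

theorem onePow_subst_exp_sub_one (x : ℚ) : (onePow x).subst (exp ℚ - 1) = expX x := by
  rw [expX_eq_rescale_exp]
  refine eq_rescale_exp_of_derivative_eq_C_mul ?_ ?_
  · rw [derivative_subst_exp_sub_one, one_add_X_mul_derivative_onePow,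
      subst_mul HasSubst.exp_sub_one, subst_C]
    rfl
  · rw [← coeff_zero_eq_constantCoeff_apply,
      coeff_subst_eq_sum_range (by simp [constantCoeff_exp])]
    simp [onePow]

theorem daehee_subst_exp_sub_one {D : ℚ⟦X⟧} {x : ℚ}
    (hD : D * X * onePow x = (1 + X) * logOneAdd) :
    D.subst (exp ℚ - 1) * (exp ℚ - 1) = X * expX (1 - x) := by
  have hE := HasSubst.exp_sub_one (A := ℚ)
  have h := congrArg (subst (exp ℚ - 1)) hD
  rw [subst_mul hE, subst_mul hE, subst_mul hE, subst_X hE, onePow_subst_exp_sub_one,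
    one_add_X_subst_exp_sub_one, logOneAdd_eq_log, log_subst_exp_sub_one] at h
  have hexp : exp ℚ = expX (1 - x) * expX x := by
    rw [expX_eq_rescale_exp, expX_eq_rescale_exp, exp_mul_exp_eq_exp_add, sub_add_cancel,
      rescale_one, RingHom.id_apply]
  refine mul_right_cancel₀ (b := expX x) (fun h0 => by simpa [expX] using congrArg (coeff 0) h0) ?_
  rw [h, hexp]
  ring

theorem bernoulli_one_sub_daehee2_stirling2 (Dhp Bp : ℕ → ℚ → ℚ) (S : ℕ → ℕ → ℚ)
    (hDhp : ∀ x : ℚ, PowerSeries.mk (fun n => Dhp n x / (Nat.factorial n : ℚ)) * PowerSeries.X * onePow x = (1 + PowerSeries.X) * logOneAdd) (hBp : ∀ x : ℚ, PowerSeries.mk (fun m => Bp m x / (Nat.factorial m : ℚ)) * (PowerSeries.exp ℚ - 1) = PowerSeries.X * expX x) (hS : ∀ n : ℕ, (PowerSeries.exp ℚ - 1) ^ n = PowerSeries.C (R := ℚ) (Nat.factorial n : ℚ) * PowerSeries.mk (fun m => S m n / (Nat.factorial m : ℚ))) :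
    ∀ (m : ℕ) (x : ℚ), Bp m (1 - x) = ∑ n ∈ Finset.range (m + 1), Dhp n x * S m n := by
  intro m x
  have hexp_ne : exp ℚ - 1 ≠ 0 := fun h => by simpa using congrArg (coeff 1) h
  have hgf : mk (fun k => Bp k (1 - x) / (k.factorial : ℚ))
      = (mk fun n => Dhp n x / (n.factorial : ℚ)).subst (exp ℚ - 1) :=
    mul_right_cancel₀ hexp_ne <| (hBp (1 - x)).trans (daehee_subst_exp_sub_one (hDhp x)).symm
  have hcoeff := congrArg (coeff m) hgf
  rw [coeff_mk, coeff_subst_eq_sum_range (by simp [constantCoeff_exp])] at hcoeff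
  simp only [coeff_mk, hS, coeff_C_mul] at hcoeff
  have hterm : ∀ n ∈ range (m + 1), Dhp n x / n.factorial * (n.factorial * (S m n / m.factorial))
      = Dhp n x * S m n / m.factorial := fun n _ => by field_simp
  rwa [sum_congr rfl hterm, ← sum_div, div_left_inj' (by positivity)] at hcoeff
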